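/- For a fixed odd integer k ≥ 5 and j ∈ ℤ with 0 < j ≤ (k-1)/2, and odd integers α₁,α₂,α₃ with |αᵢ| ≤ k-2, |αᵢ| ≠ k-2j, and α₁+α₂+α₃ ≡ 0 (mod k), the following quartic relation holds among theta constants: θ[(k-4j)/k;1]·∏ᵢθ[αᵢ/k;1] + e^{πi(k-4j)/k}·θ[(k-2j)/k;1]·∏ᵢθ[(αᵢ+2j)/k;1] + e^{πi(-k+2j)/k}·θ[(k-2j)/k;1]·∏ᵢθ[(αᵢ-2j)/k;1] = 0, where all theta constants are evaluated at (0, kz) for z in the upper half-plane. -/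

import Mathlib

/-!
Put `τ = z / 4k`. Then `θ[β/k; 1](0, kz) = e^{πiβ/2k} h_β` with
`h_b = ∑ₙ (-1)ⁿ e^{πiτ(2kn + b)²}`, and a product `h_{s+d} h_{s-d}` is a double sum which,
split by the parity of the sum of the two summation indices, becomes
`H_s H_d - H_{s+k} H_{d+k}` for the coset theta series `H_c = ∑ₙ e^{2πiτ(2kn + c)²}`
(parallelogram law `(A + B)² + (A - B)² = 2A² + 2B²`). Writing `α₀ = 2u - k`, the products
for the pairs of characteristics `(k - 4j, α₀)`, `(k - 2j, α₀ ± 2j)` and `(α₁ + e, α₂ + e)`,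
`e ∈ {0, ±2j}`, become 2 × 2 minors of the vectors `(H_c, H_{c+k})`, `c = u, u ± 2j`, and
`(H_{δ+k}, H_δ)`, as soon as `(α₁ + α₂)/2 ≡ -u (mod 2k)`. The relation is then the three-term
Plücker identity among these minors. The hypothesis `k ∣ α₀ + α₁ + α₂` gives that congruence
up to replacing `α₁` by `α₁ + 2k`, which flips the sign of every term.
-/

open Complex

/-- Theta constant with characteristics `[ε; 1]` evaluated at `z = 0`:
`θ[ε;1](0,τ) = ∑_{n∈ℤ} exp(2πi·[½(n+ε/2)²τ + (n+ε/2)·(1/2)])`. -/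
noncomputable def thetaChar (ε : ℝ) (τ : ℂ) : ℂ :=
  ∑' n : ℤ, Complex.exp (2 * Real.pi * Complex.I *
    ((1/2) * ((n : ℂ) + (ε : ℂ)/2)^2 * τ + ((n : ℂ) + (ε : ℂ)/2) * (1/2)))

open Real

theorem summable_norm_cexp_mul_sq {τ : ℂ} (hτ : 0 < τ.im) {a : ℝ} (ha : a ≠ 0) (c : ℂ) :
    Summable fun n : ℤ => ‖cexp (π * I * τ * (a * n + c) ^ 2)‖ := by
  have him : 0 < (a ^ 2 * τ).im := by
    rw [← ofReal_pow, im_ofReal_mul]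
    positivity
  refine (((summable_jacobiTheta₂_term_iff (a * c * τ) _).mpr him).mul_left
    (cexp (π * I * τ * c ^ 2))).norm.congr fun n => ?_
  rw [jacobiTheta₂_term, ← Complex.exp_add]
  ring_nf

theorem hasSum_mul_of_summable_norm {R ι κ : Type*} [NormedRing R] [CompleteSpace R]
    {f : ι → R} {g : κ → R} (hf : Summable fun i => ‖f i‖) (hg : Summable fun i => ‖g i‖) :
    HasSum (fun p : ι × κ => f p.1 * g p.2) ((∑' i, f i) * ∑' i, g i) :=
  hf.of_norm.hasSum.mul hg.of_norm.hasSum (summable_mul_of_summable_norm hf hg)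

theorem neg_one_zpow_mul_mul_neg_one_zpow_mul {R : Type*} [Field R] (p q : ℤ) (x y : R) :
    (-1) ^ p * x * ((-1) ^ q * y) = (-1) ^ (p + q) * (x * y) := by
  rw [zpow_add₀ (by norm_num)]
  ring

theorem exp_eq_neg_exp_of_eq_add {x y : ℂ} (n : ℤ) (h : x = y + π * I + n * (2 * π * I)) :
    cexp x = -cexp y := by
  rw [← mul_neg_one, ← exp_pi_mul_I, ← Complex.exp_add, Complex.exp_eq_exp_iff_exists_int]
  exact ⟨n, h⟩

def evenOddPairEquiv : (ℤ × ℤ) ⊕ (ℤ × ℤ) ≃ ℤ × ℤ where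
  toFun := Sum.elim (fun q => (q.1 + q.2, q.1 - q.2)) (fun q => (q.1 + q.2 + 1, q.1 - q.2))
  -- `/` is Euclidean division, so `(2 * t + 1) / 2 = t` also for negative `t`.
  invFun p :=
    if Even (p.1 + p.2) then .inl ((p.1 + p.2) / 2, (p.1 - p.2) / 2)
    else .inr ((p.1 + p.2) / 2, (p.1 - p.2) / 2)
  left_inv := by
    rintro (⟨t, t'⟩ | ⟨t, t'⟩)
    · simp only [Sum.elim_inl, show t + t' + (t - t') = 2 * t by ring, even_two_mul, if_true]
      congr 2 <;> omega
    · have hodd : ¬Even (t + t' + 1 + (t - t')) := by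
        rw [Int.not_even_iff_odd]
        exact ⟨t, by ring⟩
      simp only [Sum.elim_inr, hodd, if_false]
      congr 2 <;> omega
  right_inv := by
    rintro ⟨p, q⟩
    by_cases h : Even (p + q) <;> simp only [h, if_true, if_false, Sum.elim_inl, Sum.elim_inr] <;>
      rw [Int.even_iff] at h <;> ext <;> dsimp only <;> omega

noncomputable def cosetTheta (k : ℤ) (τ : ℂ) (c : ℤ) : ℂ :=
  ∑' n : ℤ, cexp (π * I * τ * (2 * k * n + c) ^ 2)

noncomputable def signedCosetTheta (k : ℤ) (τ : ℂ) (b : ℤ) : ℂ :=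
  ∑' n : ℤ, (-1) ^ n * cexp (π * I * τ * (2 * k * n + b) ^ 2)

section CosetTheta

variable {k : ℤ} {τ : ℂ}

theorem summable_norm_cosetTheta_term (hτ : 0 < τ.im) (hk : k ≠ 0) (c : ℤ) :
    Summable fun n : ℤ => ‖cexp (π * I * τ * (2 * k * n + c) ^ 2)‖ := by
  simpa using summable_norm_cexp_mul_sq hτ (a := 2 * k)
    (by exact_mod_cast mul_ne_zero two_ne_zero hk) c

theorem summable_norm_signedCosetTheta_term (hτ : 0 < τ.im) (hk : k ≠ 0) (b : ℤ) :
    Summable fun n : ℤ => ‖(-1) ^ n * cexp (π * I * τ * (2 * k * n + b) ^ 2)‖ := by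
  simpa using summable_norm_cosetTheta_term hτ hk b

theorem signedCosetTheta_add_mul_signedCosetTheta_sub (hτ : 0 < τ.im) (hk : k ≠ 0) (s d : ℤ) :
    signedCosetTheta k τ (s + d) * signedCosetTheta k τ (s - d) =
      cosetTheta k (2 * τ) s * cosetTheta k (2 * τ) d -
        cosetTheta k (2 * τ) (s + k) * cosetTheta k (2 * τ) (d + k) := by
  have h2τ : 0 < (2 * τ).im := by simpa using hτ
  have hprod := hasSum_mul_of_summable_norm (summable_norm_signedCosetTheta_term hτ hk (s + d))
    (summable_norm_signedCosetTheta_term hτ hk (s - d))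
  have hEven := hasSum_mul_of_summable_norm (summable_norm_cosetTheta_term h2τ hk s)
    (summable_norm_cosetTheta_term h2τ hk d)
  have hOdd := (hasSum_mul_of_summable_norm (summable_norm_cosetTheta_term h2τ hk (s + k))
    (summable_norm_cosetTheta_term h2τ hk (d + k))).neg
  rw [← evenOddPairEquiv.hasSum_iff] at hprod
  rw [sub_eq_add_neg]
  refine hprod.unique
    (HasSum.sum (hEven.congr_fun fun ⟨t, t'⟩ => ?_) (hOdd.congr_fun fun ⟨t, t'⟩ => ?_))
  · simp only [Function.comp_apply, evenOddPairEquiv, Equiv.coe_fn_mk, Sum.elim_inl,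
      neg_one_zpow_mul_mul_neg_one_zpow_mul,
      Even.neg_one_zpow (⟨t, by ring⟩ : Even (t + t' + (t - t'))), one_mul]
    rw [← Complex.exp_add, ← Complex.exp_add]
    push_cast
    ring_nf
  · simp only [Function.comp_apply, evenOddPairEquiv, Equiv.coe_fn_mk, Sum.elim_inr,
      neg_one_zpow_mul_mul_neg_one_zpow_mul,
      Odd.neg_one_zpow (⟨t, by ring⟩ : Odd (t + t' + 1 + (t - t'))), neg_one_mul]
    rw [← Complex.exp_add, ← Complex.exp_add]
    push_cast
    ring_nf

theorem cosetTheta_add_two_mul_mul (c m : ℤ) :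
    cosetTheta k τ (c + 2 * k * m) = cosetTheta k τ c := by
  rw [cosetTheta, cosetTheta, ← (Equiv.subRight m).tsum_eq]
  refine tsum_congr fun n => ?_
  simp only [Equiv.subRight_apply]
  push_cast
  ring_nf

theorem cosetTheta_neg (c : ℤ) : cosetTheta k τ (-c) = cosetTheta k τ c := by
  rw [cosetTheta, cosetTheta, ← (Equiv.neg ℤ).tsum_eq]
  refine tsum_congr fun n => ?_
  simp only [Equiv.neg_apply]
  push_cast
  ring_nf

theorem cosetTheta_eq_of_dvd_add {c c' : ℤ} (h : 2 * k ∣ c + c') :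
    cosetTheta k τ c = cosetTheta k τ c' := by
  obtain ⟨m, hm⟩ := h
  rw [show c = -c' + 2 * k * m by linarith, cosetTheta_add_two_mul_mul, cosetTheta_neg]

theorem signedCosetTheta_add_two_mul_mul (b m : ℤ) :
    signedCosetTheta k τ (b + 2 * k * m) = (-1) ^ m * signedCosetTheta k τ b := by
  rw [signedCosetTheta, signedCosetTheta, ← (Equiv.subRight m).tsum_eq, ← tsum_mul_left]
  refine tsum_congr fun n => ?_
  rw [Equiv.subRight_apply, zpow_sub₀ (by norm_num), div_eq_mul_inv, ← inv_zpow, inv_neg_one]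
  push_cast
  ring_nf

theorem signedCosetTheta_neg (b : ℤ) : signedCosetTheta k τ (-b) = signedCosetTheta k τ b := by
  rw [signedCosetTheta, signedCosetTheta, ← (Equiv.neg ℤ).tsum_eq]
  refine tsum_congr fun n => ?_
  rw [Equiv.neg_apply, zpow_neg, ← inv_zpow, inv_neg_one]
  push_cast
  ring_nf

theorem signedCosetTheta_eq_of_add_eq {b b' m : ℤ} (h : b + b' = 2 * k * m) :
    signedCosetTheta k τ b' = (-1) ^ m * signedCosetTheta k τ b := by
  rw [show b' = -b + 2 * k * m by linarith, signedCosetTheta_add_two_mul_mul,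
    signedCosetTheta_neg]

theorem signedCosetTheta_mul_signedCosetTheta_of_sub_eq (hτ : 0 < τ.im) (hk : k ≠ 0) {a b : ℤ}
    (s d : ℤ) (hsum : a + b = 2 * s) (hdiff : a - b = 2 * (k - d)) :
    signedCosetTheta k τ a * signedCosetTheta k τ b =
      cosetTheta k (2 * τ) s * cosetTheta k (2 * τ) (d + k) -
        cosetTheta k (2 * τ) (s + k) * cosetTheta k (2 * τ) d := by
  rw [show a = s + (k - d) by linarith, show b = s - (k - d) by linarith,
    signedCosetTheta_add_mul_signedCosetTheta_sub hτ hk,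
    cosetTheta_eq_of_dvd_add (c := k - d) (c' := d + k) ⟨1, by ring⟩,
    cosetTheta_eq_of_dvd_add (c := k - d + k) (c' := d) ⟨1, by ring⟩]

theorem signedCosetTheta_mul_signedCosetTheta_of_dvd_add (hτ : 0 < τ.im) (hk : k ≠ 0) {a b : ℤ}
    (s d : ℤ) (hsum : 4 * k ∣ a + b + 2 * s) (hdiff : a - b = 2 * d) :
    signedCosetTheta k τ a * signedCosetTheta k τ b =
      cosetTheta k (2 * τ) s * cosetTheta k (2 * τ) d -
        cosetTheta k (2 * τ) (s + k) * cosetTheta k (2 * τ) (d + k) := by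
  obtain ⟨t, ht⟩ := hsum
  rw [signedCosetTheta_eq_of_add_eq (b := s - d) (b' := a) (m := t) (by linarith),
    signedCosetTheta_eq_of_add_eq (b := s + d) (b' := b) (m := t) (by linarith),
    neg_one_zpow_mul_mul_neg_one_zpow_mul, Even.neg_one_zpow ⟨t, rfl⟩, one_mul, mul_comm,
    signedCosetTheta_add_mul_signedCosetTheta_sub hτ hk]

theorem signedCosetTheta_quartic (hτ : 0 < τ.im) (hk : k ≠ 0) {a₀ a₁ a₂ u δ : ℤ}
    (h₀ : a₀ = 2 * u - k) (h₁₂ : 4 * k ∣ a₁ + a₂ + 2 * u) (hδ : a₁ - a₂ = 2 * δ) (j : ℤ) :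
    signedCosetTheta k τ (k - 4 * j) * signedCosetTheta k τ a₀ *
        (signedCosetTheta k τ a₁ * signedCosetTheta k τ a₂) =
      signedCosetTheta k τ (k - 2 * j) * signedCosetTheta k τ (a₀ + 2 * j) *
          (signedCosetTheta k τ (a₁ + 2 * j) * signedCosetTheta k τ (a₂ + 2 * j)) +
        signedCosetTheta k τ (k - 2 * j) * signedCosetTheta k τ (a₀ - 2 * j) *
          (signedCosetTheta k τ (a₁ - 2 * j) * signedCosetTheta k τ (a₂ - 2 * j)) := by
  subst h₀
  have h₁₂' (e : ℤ) : 4 * k ∣ (a₁ + e) + (a₂ + e) + 2 * (u - e) := by convert h₁₂ using 1; ring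
  rw [signedCosetTheta_mul_signedCosetTheta_of_sub_eq hτ hk (a := k - 4 * j) (b := 2 * u - k)
      (u - 2 * j) (u + 2 * j) (by ring) (by ring),
    signedCosetTheta_mul_signedCosetTheta_of_sub_eq hτ hk (a := k - 2 * j) (b := 2 * u - k + 2 * j)
      u (u + 2 * j) (by ring) (by ring),
    signedCosetTheta_mul_signedCosetTheta_of_sub_eq hτ hk (a := k - 2 * j) (b := 2 * u - k - 2 * j)
      (u - 2 * j) u (by ring) (by ring),
    signedCosetTheta_mul_signedCosetTheta_of_dvd_add hτ hk u δ h₁₂ hδ,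
    signedCosetTheta_mul_signedCosetTheta_of_dvd_add hτ hk (u - 2 * j) δ (h₁₂' (2 * j))
      (by linarith),
    signedCosetTheta_mul_signedCosetTheta_of_dvd_add hτ hk (a := a₁ - 2 * j) (b := a₂ - 2 * j)
      (u + 2 * j) δ (by convert h₁₂' (-(2 * j)) using 2 <;> ring) (by linarith)]
  ring

theorem signedCosetTheta_quartic_of_odd (hτ : 0 < τ.im) (hk : Odd k) {a₀ a₁ a₂ : ℤ}
    (h₀ : Odd a₀) (h₁ : Odd a₁) (h₂ : Odd a₂) (hsum : k ∣ a₀ + a₁ + a₂) (j : ℤ) :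
    signedCosetTheta k τ (k - 4 * j) * signedCosetTheta k τ a₀ *
        (signedCosetTheta k τ a₁ * signedCosetTheta k τ a₂) =
      signedCosetTheta k τ (k - 2 * j) * signedCosetTheta k τ (a₀ + 2 * j) *
          (signedCosetTheta k τ (a₁ + 2 * j) * signedCosetTheta k τ (a₂ + 2 * j)) +
        signedCosetTheta k τ (k - 2 * j) * signedCosetTheta k τ (a₀ - 2 * j) *
          (signedCosetTheta k τ (a₁ - 2 * j) * signedCosetTheta k τ (a₂ - 2 * j)) := by
  obtain ⟨x, hx⟩ := hk
  obtain ⟨y₀, hy₀⟩ := h₀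
  obtain ⟨y₁, hy₁⟩ := h₁
  obtain ⟨y₂, hy₂⟩ := h₂
  obtain ⟨c, hc⟩ := hsum
  obtain ⟨m, hm⟩ : Odd c :=
    (Int.odd_mul.mp (hc ▸ (⟨y₀ + y₁ + y₂ + 1, by omega⟩ : Odd (a₀ + a₁ + a₂)))).2
  -- Here `a₁ + a₂ + 2u = 2k(m + 1)`; shifting `a₁` by `2k(m + 1)` makes it divisible by `4k`
  -- and multiplies every term by `(-1) ^ (m + 1)`.
  have key := signedCosetTheta_quartic (k := k) hτ (by omega) (a₀ := a₀)
    (a₁ := a₁ + 2 * k * (m + 1)) (a₂ := a₂) (u := y₀ + x + 1) (δ := y₁ - y₂ + k * (m + 1))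
    (by omega) ⟨m + 1, by linear_combination hc - hy₀ + k * hm - hx⟩
    (by linear_combination hy₁ - hy₂) j
  rw [add_right_comm a₁, add_sub_right_comm a₁] at key
  simp only [signedCosetTheta_add_two_mul_mul] at key
  refine (mul_right_inj' (zpow_ne_zero (m + 1) (neg_ne_zero.2 one_ne_zero) :
    (-1 : ℂ) ^ (m + 1) ≠ 0)).1 ?_
  linear_combination key

theorem thetaChar_intCast_div (hk : k ≠ 0) (β : ℤ) (z : ℂ) :
    thetaChar (β / k) (k * z) =
      cexp (π * I * β / (2 * k)) * signedCosetTheta k (z / (4 * k)) β := by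
  have hk' : (k : ℂ) ≠ 0 := Int.cast_ne_zero.mpr hk
  rw [thetaChar, signedCosetTheta, ← tsum_mul_left]
  refine tsum_congr fun n => ?_
  rw [← exp_pi_mul_I, ← Complex.exp_int_mul, ← Complex.exp_add, ← Complex.exp_add]
  congr 1
  push_cast
  field_simp
  ring

end CosetTheta

theorem quartic_theta_relation_general
    (k : ℤ) (hk_odd : Odd k) (hk : 5 ≤ k)
    (j : ℤ)
    (α : Fin 3 → ℤ)
    (hα_odd : ∀ i, Odd (α i))
    (hα_sum : (k : ℤ) ∣ (α 0 + α 1 + α 2))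
    (z : ℂ) (hz : 0 < z.im) :
    thetaChar (((k - 4*j : ℤ) : ℝ) / (k : ℝ)) ((k : ℂ) * z) *
        (∏ i : Fin 3, thetaChar (((α i : ℤ) : ℝ) / (k : ℝ)) ((k : ℂ) * z)) +
      Complex.exp (Real.pi * Complex.I * ((k - 4*j : ℤ) : ℂ) / (k : ℂ)) *
        thetaChar (((k - 2*j : ℤ) : ℝ) / (k : ℝ)) ((k : ℂ) * z) *
        (∏ i : Fin 3, thetaChar (((α i + 2*j : ℤ) : ℝ) / (k : ℝ)) ((k : ℂ) * z)) +
      Complex.exp (Real.pi * Complex.I * ((-k + 2*j : ℤ) : ℂ) / (k : ℂ)) *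
        thetaChar (((k - 2*j : ℤ) : ℝ) / (k : ℝ)) ((k : ℂ) * z) *
        (∏ i : Fin 3, thetaChar (((α i - 2*j : ℤ) : ℝ) / (k : ℝ)) ((k : ℂ) * z)) = 0 := by
  have hk0 : k ≠ 0 := by omega
  have hk' : (k : ℂ) ≠ 0 := by exact_mod_cast hk0
  have hτ : 0 < (z / (4 * k)).im := by
    rw [← Int.cast_ofNat, ← Int.cast_mul, div_intCast_im]
    have : 0 < 4 * k := by omega
    positivity
  have key := signedCosetTheta_quartic_of_odd hτ hk_odd (hα_odd 0) (hα_odd 1) (hα_odd 2) hα_sum j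
  simp only [thetaChar_intCast_div hk0, Finset.prod_mul_distrib, ← Complex.exp_sum,
    Fin.prod_univ_three]
  set ϑ := signedCosetTheta k (z / (4 * k))
  set Φ := cexp (π * I * (k - 4 * j : ℤ) / (2 * k)) * cexp (∑ i, π * I * (α i : ℤ) / (2 * k))
  have hB : cexp (π * I * (k - 4 * j : ℤ) / k) * cexp (π * I * (k - 2 * j : ℤ) / (2 * k)) *
      cexp (∑ i, π * I * (α i + 2 * j : ℤ) / (2 * k)) = -Φ := by
    simp only [Φ, ← Complex.exp_add]
    refine exp_eq_neg_exp_of_eq_add 0 ?_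
    push_cast [Fin.sum_univ_three]
    field_simp
    ring
  have hC : cexp (π * I * (-k + 2 * j : ℤ) / k) * cexp (π * I * (k - 2 * j : ℤ) / (2 * k)) *
      cexp (∑ i, π * I * (α i - 2 * j : ℤ) / (2 * k)) = -Φ := by
    simp only [Φ, ← Complex.exp_add]
    refine exp_eq_neg_exp_of_eq_add (-1) ?_
    push_cast [Fin.sum_univ_three]
    field_simp
    ring
  linear_combination Φ * key
    + ϑ (k - 2 * j) * (ϑ (α 0 + 2 * j) * ϑ (α 1 + 2 * j) * ϑ (α 2 + 2 * j)) * hB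
    + ϑ (k - 2 * j) * (ϑ (α 0 - 2 * j) * ϑ (α 1 - 2 * j) * ϑ (α 2 - 2 * j)) * hC

/-- Farkas–Kra quartic relation among theta constants (Proposition 7.3). -/
theorem quartic_theta_relation
    (k : ℤ) (hk_odd : Odd k) (hk : 5 ≤ k)
    (j : ℤ) (hj0 : 0 < j) (hj : 2 * j ≤ k - 1)
    (α : Fin 3 → ℤ)
    (hα_odd : ∀ i, Odd (α i))
    (hα_le : ∀ i, |α i| ≤ k - 2)
    (hα_ne : ∀ i, |α i| ≠ k - 2 * j)
    (hα_sum : (k : ℤ) ∣ (α 0 + α 1 + α 2))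
    (z : ℂ) (hz : 0 < z.im) :
    thetaChar (((k - 4*j : ℤ) : ℝ) / (k : ℝ)) ((k : ℂ) * z) *
        (∏ i : Fin 3, thetaChar (((α i : ℤ) : ℝ) / (k : ℝ)) ((k : ℂ) * z)) +
      Complex.exp (Real.pi * Complex.I * ((k - 4*j : ℤ) : ℂ) / (k : ℂ)) *
        thetaChar (((k - 2*j : ℤ) : ℝ) / (k : ℝ)) ((k : ℂ) * z) *
        (∏ i : Fin 3, thetaChar (((α i + 2*j : ℤ) : ℝ) / (k : ℝ)) ((k : ℂ) * z)) +
      Complex.exp (Real.pi * Complex.I * ((-k + 2*j : ℤ) : ℂ) / (k : ℂ)) *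
        thetaChar (((k - 2*j : ℤ) : ℝ) / (k : ℝ)) ((k : ℂ) * z) *
        (∏ i : Fin 3, thetaChar (((α i - 2*j : ℤ) : ℝ) / (k : ℝ)) ((k : ℂ) * z)) = 0 :=
  quartic_theta_relation_general k hk_odd hk j α hα_odd hα_sum z hz
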